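/- Let μ and ν be compactly supported probability measures on ℝ with moments m^μ_k = ∫ x^k dμ and m^ν_k = ∫ x^k dν, let p, q ∈ ℝ[x], and define Q : ℝ[x] → ℝ[x] by Q[f] = p · L_ν[L_μ[f]] + q · L_μ[f]. If Q has a polynomial system of eigenfunctions, then deg q ≤ 1 and deg p ≤ 2, and writing p(x) = a + b x + c x², q(x) = d + e x, one has, for every n ≥ 1, a Σ_{i+j=n−2} m^μ_i m^ν_j + b Σ_{i+j=n−1} m^μ_i m^ν_j + c Σ_{i+j=n} m^μ_i m^ν_j + d m^μ_{n−1} + e m^μ_n = 0 (sums over i, j ≥ 0; empty sums are 0); equivalently, (a z² + b z + c) M_μ(z) M_ν(z) + (d z + e) M_μ(z) = c + e as formal power series, where M_μ(z) = Σ m^μ_n z^n and M_ν(z) = Σ m^ν_n z^n. -/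

import Mathlib

open MeasureTheory Polynomial

/-- Moments of a measure on ℝ. -/
noncomputable def mom (ρ : Measure ℝ) (k : ℕ) : ℝ := ∫ x, x ^ k ∂ρ

/-- The operator `L_ρ` on polynomials, defined via the moment sequence `m` of `ρ`:
`L[x^n] = Σ_{k=0}^{n-1} m_{n-1-k} x^k`. -/
noncomputable def Lop (m : ℕ → ℝ) (f : Polynomial ℝ) : Polynomial ℝ :=
  f.sum fun n a => C a * ∑ k ∈ Finset.range n, C (m (n - 1 - k)) * X ^ k

/-- A measure has compact support. -/
def CompactSupp (μ : Measure ℝ) : Prop := ∃ K : Set ℝ, IsCompact K ∧ μ Kᶜ = 0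

/-- A polynomial system of eigenfunctions for an operator on polynomials. -/
def HasPolyEigenfunctions (Q : Polynomial ℝ → Polynomial ℝ) : Prop :=
  ∃ (P : ℕ → Polynomial ℝ) (lam : ℕ → ℝ),
    (∀ n, (P n).degree = (n : WithBot ℕ)) ∧ (∀ n, Q (P n) = lam n • P n)

/-!
Write `Q` for the operator and `λ = p₂ + q₁`. Since `m₀ = 1`, each `L_ρ` kills constants and lowers
the degree of other polynomials by one, keeping the leading coefficient. Hence `Q[P₁] = lc(P₁) q` and
`Q[P₂] = lc(P₂) p + q L_μ[P₂]`, which give `deg q ≤ 1` and `deg p ≤ 2`. Then `Q` is triangular in the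
monomial basis with diagonal entry `λ` in every degree `≥ 2`, so `λₙ = λ` for `n ≥ 2`. As the `Pₙ`
span `ℝ[x]`, `Q - λ` maps every polynomial to one of degree `≤ 1`. The coefficient of `x²` in
`(Q - λ)[xⁿ]` is the `n`-th coefficient of `z² ((a z² + b z + c) M_μ M_ν + (d z + e) M_μ - (c + e))`,
so this series vanishes; the moment identities are its coefficients.
-/

open Finset

section Lop

variable (m : ℕ → ℝ)

noncomputable def lop : ℝ[X] →ₗ[ℝ] ℝ[X] where
  toFun := Lop m
  map_add' f g := sum_add_index f g _ (fun _ => by simp) fun _ a b => by rw [C_add, add_mul]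
  map_smul' a f := by
    rw [RingHom.id_apply, Lop, Lop, sum_smul_index _ _ _ (by simp), Polynomial.sum,
      Polynomial.sum, Finset.smul_sum]
    exact sum_congr rfl fun n _ => by rw [C_mul, mul_assoc, C_mul']

theorem lop_apply (f : ℝ[X]) : lop m f = Lop m f := rfl

theorem Lop_X_pow (n : ℕ) : Lop m (X ^ n) = ∑ k ∈ range n, C (m (n - 1 - k)) * X ^ k := by
  rw [Lop, X_pow_eq_monomial, sum_monomial_index _ _ (by simp), C_1, one_mul]

theorem coeff_Lop_X_pow (n j : ℕ) :
    (Lop m (X ^ n)).coeff j = if j < n then m (n - 1 - j) else 0 := by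
  simp [Lop_X_pow]

theorem coeff_Lop (f : ℝ[X]) (j : ℕ) :
    (Lop m f).coeff j =
      ∑ n ∈ range (f.natDegree + 1), f.coeff n * if j < n then m (n - 1 - j) else 0 := by
  nth_rw 1 [f.as_sum_range_C_mul_X_pow, ← lop_apply, map_sum, finsetSum_coeff]
  refine sum_congr rfl fun n _ => ?_
  rw [C_mul', map_smul, coeff_smul, lop_apply, coeff_Lop_X_pow, smul_eq_mul]

theorem natDegree_Lop_le (f : ℝ[X]) : (Lop m f).natDegree ≤ f.natDegree - 1 :=
  natDegree_le_iff_coeff_eq_zero.mpr fun j hj => by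
    rw [coeff_Lop]
    exact sum_eq_zero fun n hn => by
      rw [mem_range] at hn
      rw [if_neg (by omega), mul_zero]

theorem coeff_Lop_of_natDegree_le {f : ℝ[X]} {j : ℕ} (hf : f.natDegree ≤ j + 1) :
    (Lop m f).coeff j = f.coeff (j + 1) * m 0 := by
  rw [coeff_Lop, sum_eq_single (j + 1)]
  · simp
  · intro n hn hne
    rw [mem_range] at hn
    rw [if_neg (by omega), mul_zero]
  · intro h
    rw [mem_range] at h
    rw [coeff_eq_zero_of_natDegree_lt (by omega), zero_mul]

theorem Lop_eq_C_of_natDegree_le_one {f : ℝ[X]} (hf : f.natDegree ≤ 1) :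
    Lop m f = C (f.coeff 1 * m 0) := by
  rw [eq_C_of_natDegree_le_zero ((natDegree_Lop_le m f).trans (by omega)),
    coeff_Lop_of_natDegree_le m hf]

theorem Lop_C (a : ℝ) : Lop m (C a) = 0 := by
  rw [Lop_eq_C_of_natDegree_le_one m (by simp), coeff_C, if_neg one_ne_zero, zero_mul,
    C_0]

theorem coeff_Lop_Lop_X_pow (w : ℕ → ℝ) (n j : ℕ) :
    (Lop w (Lop m (X ^ n))).coeff j =
      PowerSeries.coeff n (PowerSeries.X ^ (j + 2) * (PowerSeries.mk m * PowerSeries.mk w)) := by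
  rw [Lop_X_pow, ← lop_apply, map_sum, finsetSum_coeff]
  simp_rw [C_mul', map_smul, coeff_smul, lop_apply, coeff_Lop_X_pow, smul_eq_mul]
  rw [show PowerSeries.X ^ (j + 2) * (PowerSeries.mk m * PowerSeries.mk w) =
      (PowerSeries.X ^ (j + 1) * PowerSeries.mk w) * (PowerSeries.X * PowerSeries.mk m) by ring,
    PowerSeries.coeff_mul, Nat.sum_antidiagonal_eq_sum_range_succ
      (fun a b => PowerSeries.coeff a _ * PowerSeries.coeff b _), sum_range_succ, Nat.sub_self,
    PowerSeries.coeff_zero_X_mul, mul_zero, add_zero]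
  refine sum_congr rfl fun k hk => ?_
  rw [mem_range] at hk
  rw [show n - k = n - 1 - k + 1 by omega, PowerSeries.coeff_succ_X_mul,
    PowerSeries.coeff_X_pow_mul']
  simp only [PowerSeries.coeff_mk]
  split_ifs <;> first | omega | simp | rw [Nat.sub_sub k 1 j, add_comm 1 j, mul_comm]

end Lop

theorem PowerSeries.coeff_X_pow_mul_mk_mul_mk (m w : ℕ → ℝ) (k n : ℕ) :
    PowerSeries.coeff n (PowerSeries.X ^ k * (PowerSeries.mk m * PowerSeries.mk w)) =
      ∑ i ∈ range (n + 1 - k), m i * w (n - k - i) := by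
  rw [PowerSeries.coeff_X_pow_mul']
  split_ifs with hk
  · rw [PowerSeries.coeff_mul, Nat.sum_antidiagonal_eq_sum_range_succ_mk, Nat.succ_eq_add_one,
      Nat.sub_add_comm hk]
    simp only [PowerSeries.coeff_mk]
  · rw [show n + 1 - k = 0 by omega, sum_range_zero]

noncomputable def Qop (m w : ℕ → ℝ) (p q : ℝ[X]) : ℝ[X] →ₗ[ℝ] ℝ[X] :=
  LinearMap.mulLeft ℝ p ∘ₗ lop w ∘ₗ lop m + LinearMap.mulLeft ℝ q ∘ₗ lop m

section Qop

variable {m w : ℕ → ℝ} {p q : ℝ[X]}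

theorem Qop_apply (f : ℝ[X]) :
    Qop m w p q f = p * Lop w (Lop m f) + q * Lop m f := rfl

theorem natDegree_le_one_of_Qop_eigen (hm : m 0 = 1) {P : ℝ[X]} (hP : P.degree = 1)
    {c : ℝ} (h : Qop m w p q P = c • P) : q.natDegree ≤ 1 := by
  have hlc : P.coeff 1 ≠ 0 := coeff_ne_zero_of_eq_degree hP
  replace hP : P.natDegree = 1 := natDegree_eq_of_degree_eq_some hP
  rw [Qop_apply, Lop_eq_C_of_natDegree_le_one m hP.le, Lop_C, mul_zero, zero_add, hm,
    mul_one] at h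
  calc q.natDegree = (q * C (P.coeff 1)).natDegree := (natDegree_mul_C hlc).symm
    _ ≤ 1 := h ▸ (natDegree_smul_le c P).trans hP.le

theorem natDegree_le_two_of_Qop_eigen (hm : m 0 = 1) (hw : w 0 = 1) (hq : q.natDegree ≤ 1)
    {P : ℝ[X]} (hP : P.degree = 2) {c : ℝ} (h : Qop m w p q P = c • P) :
    p.natDegree ≤ 2 := by
  have hlc : P.coeff 2 ≠ 0 := coeff_ne_zero_of_eq_degree hP
  replace hP : P.natDegree = 2 := natDegree_eq_of_degree_eq_some hP
  have hL : (Lop m P).natDegree ≤ 1 := (natDegree_Lop_le m P).trans (by omega)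
  rw [Qop_apply, Lop_eq_C_of_natDegree_le_one w hL, coeff_Lop_of_natDegree_le m hP.le, hm,
    hw, mul_one, mul_one, ← eq_sub_iff_add_eq] at h
  calc p.natDegree = (p * C (P.coeff 2)).natDegree := (natDegree_mul_C hlc).symm
    _ ≤ 2 := h ▸ (natDegree_sub_le _ _).trans (max_le ((natDegree_smul_le c P).trans hP.le)
        (natDegree_mul_le.trans (by omega)))

theorem coeff_Qop_of_natDegree_le (hm : m 0 = 1) (hw : w 0 = 1) (hp : p.natDegree ≤ 2)
    (hq : q.natDegree ≤ 1) {f : ℝ[X]} {k : ℕ} (hf : f.natDegree ≤ k + 2) :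
    (Qop m w p q f).coeff (k + 2) = (p.coeff 2 + q.coeff 1) * f.coeff (k + 2) := by
  have h₁ : (Lop m f).natDegree ≤ k + 1 := (natDegree_Lop_le m f).trans (by omega)
  have h₂ : (Lop w (Lop m f)).natDegree ≤ k := (natDegree_Lop_le w _).trans (by omega)
  have hpG := coeff_mul_add_eq_of_natDegree_le hp h₂
  have hqH := coeff_mul_add_eq_of_natDegree_le hq h₁
  rw [add_comm 2 k] at hpG
  rw [add_comm 1 (k + 1)] at hqH
  rw [Qop_apply, coeff_add, hpG, hqH, coeff_Lop_of_natDegree_le w h₁,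
    coeff_Lop_of_natDegree_le m hf, hm, hw]
  ring

theorem eigenvalue_eq_of_natDegree_eq (hm : m 0 = 1) (hw : w 0 = 1) (hp : p.natDegree ≤ 2)
    (hq : q.natDegree ≤ 1) {P : ℝ[X]} {k : ℕ} (hP : P.degree = ↑(k + 2)) {c : ℝ}
    (h : Qop m w p q P = c • P) : c = p.coeff 2 + q.coeff 1 := by
  have := coeff_Qop_of_natDegree_le hm hw hp hq (natDegree_eq_of_degree_eq_some hP).le
  rw [h, coeff_smul, smul_eq_mul] at this
  exact mul_right_cancel₀ (coeff_ne_zero_of_eq_degree hP) this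

theorem natDegree_le_of_hasPolyEigenfunctions (hm : m 0 = 1) (hw : w 0 = 1)
    (hQ : HasPolyEigenfunctions (Qop m w p q)) : q.natDegree ≤ 1 ∧ p.natDegree ≤ 2 := by
  obtain ⟨P, c, hdeg, heig⟩ := hQ
  have hq := natDegree_le_one_of_Qop_eigen hm (by exact_mod_cast hdeg 1) (heig 1)
  exact ⟨hq, natDegree_le_two_of_Qop_eigen hm hw hq (by exact_mod_cast hdeg 2) (heig 2)⟩

theorem Qop_sub_smul_mem_degreeLE (hm : m 0 = 1) (hw : w 0 = 1)
    (hQ : HasPolyEigenfunctions (Qop m w p q)) (f : ℝ[X]) :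
    Qop m w p q f - (p.coeff 2 + q.coeff 1) • f ∈ degreeLE ℝ 1 := by
  obtain ⟨hq, hp⟩ := natDegree_le_of_hasPolyEigenfunctions hm hw hQ
  obtain ⟨P, c, hdeg, heig⟩ := hQ
  let T := Qop m w p q - (p.coeff 2 + q.coeff 1) • LinearMap.id
  have hspan : Submodule.span ℝ (Set.range P) = ⊤ :=
    Sequence.span ⟨P, hdeg⟩ fun n =>
      (leadingCoeff_ne_zero.mpr (Sequence.ne_zero ⟨P, hdeg⟩ n)).isUnit
  have hrange : Set.range P ⊆ T ⁻¹' degreeLE ℝ 1 := by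
    rintro _ ⟨n, rfl⟩
    change Qop m w p q (P n) - (p.coeff 2 + q.coeff 1) • P n ∈ degreeLE ℝ 1
    rw [heig n, ← sub_smul]
    rcases lt_or_ge n 2 with hn | hn
    · refine Submodule.smul_mem _ _ (mem_degreeLE.mpr ?_)
      rw [hdeg n]
      exact_mod_cast (by omega : n ≤ 1)
    · obtain ⟨k, rfl⟩ := Nat.exists_eq_add_of_le' hn
      rw [eigenvalue_eq_of_natDegree_eq hm hw hp hq (hdeg _) (heig _), sub_self, zero_smul]
      exact zero_mem _
  exact (Submodule.span_le (p := (degreeLE ℝ 1).comap T)).mpr hrange (hspan ▸ Submodule.mem_top)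

theorem Qop_series_identity (hq : q.coeff 2 = 0)
    (h : ∀ f, Qop m w p q f - (p.coeff 2 + q.coeff 1) • f ∈ degreeLE ℝ 1) :
    (PowerSeries.C (R := ℝ) (p.coeff 0) * PowerSeries.X ^ 2
        + PowerSeries.C (R := ℝ) (p.coeff 1) * PowerSeries.X + PowerSeries.C (R := ℝ) (p.coeff 2))
      * PowerSeries.mk m * PowerSeries.mk w
    + (PowerSeries.C (R := ℝ) (q.coeff 0) * PowerSeries.X + PowerSeries.C (R := ℝ) (q.coeff 1))
      * PowerSeries.mk m
    = PowerSeries.C (R := ℝ) (p.coeff 2 + q.coeff 1) := by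
  have hLop (n j : ℕ) : (Lop m (X ^ n)).coeff j =
      PowerSeries.coeff n (PowerSeries.X ^ (j + 1) * PowerSeries.mk m) := by
    rw [coeff_Lop_X_pow, PowerSeries.coeff_X_pow_mul', PowerSeries.coeff_mk]
    split_ifs <;> first | omega | rfl | exact congrArg m (by omega)
  rw [← sub_eq_zero]
  refine (mul_eq_zero.mp ?_).resolve_left (pow_ne_zero 2 PowerSeries.X_ne_zero)
  ext n
  have hn := coeff_eq_zero_of_degree_lt ((mem_degreeLE.mp (h (X ^ n))).trans_lt
    (by exact_mod_cast Nat.one_lt_two))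
  rw [Qop_apply, coeff_sub, coeff_add, coeff_mul, coeff_mul, coeff_smul, coeff_X_pow,
    Nat.sum_antidiagonal_eq_sum_range_succ_mk, Nat.sum_antidiagonal_eq_sum_range_succ_mk] at hn
  simp only [sum_range_succ, sum_range_zero, zero_add, coeff_Lop_Lop_X_pow, hLop, hq, zero_mul,
    add_zero, smul_eq_mul] at hn
  rw [show PowerSeries.X ^ 2 * (_ - PowerSeries.C (p.coeff 2 + q.coeff 1)) =
      PowerSeries.C (p.coeff 0) * (PowerSeries.X ^ 4 * (PowerSeries.mk m * PowerSeries.mk w))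
      + PowerSeries.C (p.coeff 1) * (PowerSeries.X ^ 3 * (PowerSeries.mk m * PowerSeries.mk w))
      + PowerSeries.C (p.coeff 2) * (PowerSeries.X ^ 2 * (PowerSeries.mk m * PowerSeries.mk w))
      + PowerSeries.C (q.coeff 0) * (PowerSeries.X ^ 3 * PowerSeries.mk m)
      + PowerSeries.C (q.coeff 1) * (PowerSeries.X ^ 2 * PowerSeries.mk m)
      - PowerSeries.C (p.coeff 2 + q.coeff 1) * PowerSeries.X ^ 2 by ring]
  rw [map_sub, PowerSeries.coeff_C_mul_X_pow]
  simp only [map_add, PowerSeries.coeff_C_mul, map_zero]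
  simp only [Nat.reduceSub, Nat.reduceAdd, @eq_comm ℕ 2, mul_ite, mul_one, mul_zero] at hn
  linear_combination hn

end Qop

theorem moment_identity_of_series_identity {m w : ℕ → ℝ} {a b c d e : ℝ}
    (h : (PowerSeries.C (R := ℝ) a * PowerSeries.X ^ 2 + PowerSeries.C (R := ℝ) b * PowerSeries.X
        + PowerSeries.C (R := ℝ) c) * PowerSeries.mk m * PowerSeries.mk w
      + (PowerSeries.C (R := ℝ) d * PowerSeries.X + PowerSeries.C (R := ℝ) e) * PowerSeries.mk m
      = PowerSeries.C (R := ℝ) (c + e))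
    {n : ℕ} (hn : 1 ≤ n) :
    a * (∑ i ∈ range (n - 1), m i * w (n - 2 - i))
      + b * (∑ i ∈ range n, m i * w (n - 1 - i))
      + c * (∑ i ∈ range (n + 1), m i * w (n - i))
      + d * m (n - 1) + e * m n = 0 := by
  have key : PowerSeries.C a * (PowerSeries.X ^ 2 * (PowerSeries.mk m * PowerSeries.mk w))
      + PowerSeries.C b * (PowerSeries.X ^ 1 * (PowerSeries.mk m * PowerSeries.mk w))
      + PowerSeries.C c * (PowerSeries.X ^ 0 * (PowerSeries.mk m * PowerSeries.mk w))
      + PowerSeries.C d * (PowerSeries.X ^ 1 * PowerSeries.mk m)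
      + PowerSeries.C e * (PowerSeries.X ^ 0 * PowerSeries.mk m) = PowerSeries.C (c + e) := by
    rw [← h]; ring
  have := congrArg (PowerSeries.coeff n) key
  simp only [map_add, PowerSeries.coeff_C_mul, PowerSeries.coeff_X_pow_mul_mk_mul_mk] at this
  simp only [PowerSeries.coeff_X_pow_mul', PowerSeries.coeff_mk, PowerSeries.coeff_C] at this
  simpa [hn, Nat.one_le_iff_ne_zero.mp hn] using this

theorem mom_zero (ρ : Measure ℝ) [IsProbabilityMeasure ρ] : mom ρ 0 = 1 := by
  simp [mom]

theorem stmt12_general (μ ν : Measure ℝ) [IsProbabilityMeasure μ] [IsProbabilityMeasure ν]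
    (p q : Polynomial ℝ)
    (hQ : HasPolyEigenfunctions
      (fun f => p * Lop (mom ν) (Lop (mom μ) f) + q * Lop (mom μ) f)) :
    q.degree ≤ 1 ∧ p.degree ≤ 2 ∧
    (∀ n : ℕ, 1 ≤ n →
      p.coeff 0 * (∑ i ∈ Finset.range (n - 1), mom μ i * mom ν (n - 2 - i))
      + p.coeff 1 * (∑ i ∈ Finset.range n, mom μ i * mom ν (n - 1 - i))
      + p.coeff 2 * (∑ i ∈ Finset.range (n + 1), mom μ i * mom ν (n - i))
      + q.coeff 0 * mom μ (n - 1) + q.coeff 1 * mom μ n = 0) ∧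
    (PowerSeries.C (R := ℝ) (p.coeff 0) * PowerSeries.X ^ 2
        + PowerSeries.C (R := ℝ) (p.coeff 1) * PowerSeries.X + PowerSeries.C (R := ℝ) (p.coeff 2))
      * PowerSeries.mk (mom μ) * PowerSeries.mk (mom ν)
    + (PowerSeries.C (R := ℝ) (q.coeff 0) * PowerSeries.X + PowerSeries.C (R := ℝ) (q.coeff 1))
      * PowerSeries.mk (mom μ)
    = PowerSeries.C (R := ℝ) (p.coeff 2 + q.coeff 1) := by
  have hm := mom_zero μ
  have hw := mom_zero ν
  obtain ⟨hq, hp⟩ := natDegree_le_of_hasPolyEigenfunctions hm hw hQ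
  have hseries := Qop_series_identity (coeff_eq_zero_of_natDegree_lt (by omega))
    (Qop_sub_smul_mem_degreeLE hm hw hQ)
  exact ⟨natDegree_le_iff_degree_le.mp hq, natDegree_le_iff_degree_le.mp hp,
    fun n hn => moment_identity_of_series_identity hseries hn, hseries⟩

theorem stmt12 (μ ν : Measure ℝ) [IsProbabilityMeasure μ] [IsProbabilityMeasure ν]
    (hcsμ : CompactSupp μ) (hcsν : CompactSupp ν)
    (p q : Polynomial ℝ)
    (hQ : HasPolyEigenfunctions
      (fun f => p * Lop (mom ν) (Lop (mom μ) f) + q * Lop (mom μ) f)) :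
    q.degree ≤ 1 ∧ p.degree ≤ 2 ∧
    (∀ n : ℕ, 1 ≤ n →
      p.coeff 0 * (∑ i ∈ Finset.range (n - 1), mom μ i * mom ν (n - 2 - i))
      + p.coeff 1 * (∑ i ∈ Finset.range n, mom μ i * mom ν (n - 1 - i))
      + p.coeff 2 * (∑ i ∈ Finset.range (n + 1), mom μ i * mom ν (n - i))
      + q.coeff 0 * mom μ (n - 1) + q.coeff 1 * mom μ n = 0) ∧
    (PowerSeries.C (R := ℝ) (p.coeff 0) * PowerSeries.X ^ 2
        + PowerSeries.C (R := ℝ) (p.coeff 1) * PowerSeries.X + PowerSeries.C (R := ℝ) (p.coeff 2))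
      * PowerSeries.mk (mom μ) * PowerSeries.mk (mom ν)
    + (PowerSeries.C (R := ℝ) (q.coeff 0) * PowerSeries.X + PowerSeries.C (R := ℝ) (q.coeff 1))
      * PowerSeries.mk (mom μ)
    = PowerSeries.C (R := ℝ) (p.coeff 2 + q.coeff 1) :=
  stmt12_general μ ν p q hQ
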